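/- arXiv:2602.06874 — 2 statements merged into one kernel-verified Lean document; each statement's English description precedes it below -/
import Mathlib

section
/- For every positive integer c, if a graph G contains, as an induced subgraph, a proper subdivision of the wall W_{1×c²} (the 1-by-c² hexagonal grid, consisting of two horizontal paths P and Q joined by c²+1 vertical paths), then G has induced cycles of at least c distinct lengths, i.e., cl(G) ≥ c. -/
/-!
Each interval `[a, b]` of consecutive faces of the wall is bounded by a cycle of the wall (along
the top path from column `a` to column `b`, down the rung at `b`, back along the bottom path, up
the rung at `a`). In a proper subdivision every cycle of the wall becomes an induced cycle,
because an edge of the wall off the cycle becomes a path of length at least two and so is no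
chord. The face interval `[a, b]` thus yields an induced cycle of length
`ℓ(a, b) = v a + v b + t a + ⋯ + t (b - 1)`, where `v j` is the length of the `j`-th vertical path
and `t k > 0` the total length of the two horizontal paths of face `k`. Since
`ℓ(0, j) - ℓ(j, c²)` is strictly increasing in `j`, the `c² - 1` interior columns `j` give
distinct pairs `(ℓ(0, j), ℓ(j, c²))`, so there are at least `c` distinct lengths.
-/

open SimpleGraph

namespace ClPaper

variable {V : Type}

/-- Two vertex sets are anticomplete: no edge of `G` has one end in each. -/
def Anticomplete (G : SimpleGraph V) (X Y : Set V) : Prop :=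
  ∀ ⦃x⦄, x ∈ X → ∀ ⦃y⦄, y ∈ Y → ¬ G.Adj x y

/-- `G` contains `H` as an induced subgraph. -/
def ContainsInduced (G : SimpleGraph V) {W : Type} (H : SimpleGraph W) : Prop :=
  Nonempty (H ↪g G)

/-- `G` has an induced cycle of length `n`. -/
def HasInducedCycleOfLength (G : SimpleGraph V) (n : ℕ) : Prop :=
  3 ≤ n ∧ ContainsInduced G (cycleGraph n)

/-- `G` has induced cycles of at least `c` distinct lengths, i.e. `cl(G) ≥ c`. -/
def ClAtLeast (G : SimpleGraph V) (c : ℕ) : Prop :=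
  ∃ L : Finset ℕ, L.card = c ∧ ∀ n ∈ L, HasInducedCycleOfLength G n

/-- `G` has an induced minor isomorphic to `H`: there are nonempty, pairwise disjoint,
connected branch sets, one for each vertex of `H`, such that two branch sets are joined
by an edge of `G` if and only if the corresponding vertices are adjacent in `H`. -/
def HasInducedMinor (G : SimpleGraph V) {W : Type} (H : SimpleGraph W) : Prop :=
  ∃ B : W → Set V,
    (∀ w, (B w).Nonempty) ∧
    (∀ w, (G.induce (B w)).Connected) ∧
    (∀ w w', w ≠ w' → Disjoint (B w) (B w')) ∧
    (∀ w w', w ≠ w' → (H.Adj w w' ↔ ∃ u ∈ B w, ∃ v ∈ B w', G.Adj u v))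

/-- `G` is `t`-tidy: no induced `K_{t+1}` and no induced `K_{t,t}`-minor. -/
def Tidy (G : SimpleGraph V) (t : ℕ) : Prop :=
  ¬ ContainsInduced G (completeGraph (Fin (t + 1))) ∧
  ¬ HasInducedMinor G (completeBipartiteGraph (Fin t) (Fin t))

/-- A walk that is an induced path of `G`. -/
def IsInducedPathWalk (G : SimpleGraph V) {a b : V} (p : G.Walk a b) : Prop :=
  p.IsPath ∧ ∀ u ∈ p.support, ∀ v ∈ p.support, G.Adj u v → s(u, v) ∈ p.edges

/-- The vertex set of a walk. -/
def suppSet {G : SimpleGraph V} {a b : V} (p : G.Walk a b) : Set V :=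
  {v | v ∈ p.support}

/-- The interior (internal vertices) of a walk. -/
def interiorSet {G : SimpleGraph V} {a b : V} (p : G.Walk a b) : Set V :=
  {v | v ∈ p.support ∧ v ≠ a ∧ v ≠ b}

/-- A `q`-banana with ends `x, z`: `q` pairwise internally disjoint induced `x`–`z` paths. -/
def IsBanana (G : SimpleGraph V) {q : ℕ} {x z : V} (P : Fin q → G.Walk x z) : Prop :=
  x ≠ z ∧ Function.Injective P ∧
  (∀ i, IsInducedPathWalk G (P i)) ∧
  (∀ i j, i ≠ j → ∀ v, v ∈ (P i).support → v ∈ (P j).support → v = x ∨ v = z)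

/-- The vertex set of a banana (or theta). -/
def bananaVerts {G : SimpleGraph V} {q : ℕ} {x z : V} (P : Fin q → G.Walk x z) : Set V :=
  ⋃ i, suppSet (P i)

/-- A `q`-theta: a banana whose path interiors are pairwise anticomplete. -/
def IsTheta (G : SimpleGraph V) {q : ℕ} {x z : V} (P : Fin q → G.Walk x z) : Prop :=
  IsBanana G P ∧
  ∀ i j, i ≠ j → Anticomplete G (interiorSet (P i)) (interiorSet (P j))

/-- A rigid banana: no two path interiors are anticomplete. -/
def IsRigidBanana (G : SimpleGraph V) {q : ℕ} {x z : V} (P : Fin q → G.Walk x z) : Prop :=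
  IsBanana G P ∧
  ∀ i j, i ≠ j → ¬ Anticomplete G (interiorSet (P i)) (interiorSet (P j))

/-- An `l`-dense banana: its vertex set contains no `l`-theta with the same ends. -/
def IsDenseBanana (G : SimpleGraph V) (l : ℕ) {q : ℕ} {x z : V}
    (P : Fin q → G.Walk x z) : Prop :=
  IsBanana G P ∧
  ¬ ∃ Q : Fin l → G.Walk x z, IsTheta G Q ∧ bananaVerts Q ⊆ bananaVerts P

/-- The number of neighbours of `v` inside the set `A`; this is the degree of `v`
in the subgraph of `G` induced by `A ∪ {v}`. -/
noncomputable def degIn (G : SimpleGraph V) (A : Set V) (v : V) : ℕ :=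
  (A ∩ G.neighborSet v).ncard

/-- `S` induces a subdivided star in `G` with root `x` and leaf set `L`:
a tree with exactly one vertex of degree at least three. -/
def IsSubdividedStar (G : SimpleGraph V) (S : Set V) (x : V) (L : Set V) : Prop :=
  x ∈ S ∧ L ⊆ S ∧ (G.induce S).IsTree ∧
  3 ≤ degIn G S x ∧
  (∀ v ∈ S, v ≠ x → degIn G S v ≤ 2) ∧
  (∀ v, v ∈ L ↔ v ∈ S ∧ degIn G S v = 1)

/-- An `(s,d)`-dome with root `x`, all of whose vertices lie in `A`. -/
def IsDomeIn (G : SimpleGraph V) (A : Set V) (s d : ℕ) (x : V) : Prop :=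
  ∃ (S L : Set V) (a b : V) (P : G.Walk a b),
    S ⊆ A ∧ suppSet P ⊆ A ∧
    IsSubdividedStar G S x L ∧ L.ncard = s ∧
    IsInducedPathWalk G P ∧
    Disjoint S (suppSet P) ∧
    Anticomplete G (S \ L) (suppSet P) ∧
    (∀ v ∈ L, ∃ u ∈ P.support, G.Adj v u) ∧
    (∀ u ∈ P.support, degIn G L u ≤ d)

/-- An `(s,d)`-dome in `G` with root `x`. -/
def IsDome (G : SimpleGraph V) (s d : ℕ) (x : V) : Prop :=
  IsDomeIn G Set.univ s d x

/-- An aligned `(s,d)`-dome in `G`: there is an ordering `ℓ 0, …, ℓ (s-1)` of the leaves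
and pairwise disjoint subpaths of `P` (given by index intervals `[lo i, hi i]` along the
support of `P`, occurring in order) containing all neighbours of the respective leaf. -/
def IsAlignedDome (G : SimpleGraph V) (s d : ℕ) : Prop :=
  ∃ (x : V) (S L : Set V) (a b : V) (P : G.Walk a b) (ℓ : Fin s → V) (lo hi : Fin s → ℕ),
    IsSubdividedStar G S x L ∧ L.ncard = s ∧
    IsInducedPathWalk G P ∧
    Disjoint S (suppSet P) ∧
    Anticomplete G (S \ L) (suppSet P) ∧
    (∀ v ∈ L, ∃ u ∈ P.support, G.Adj v u) ∧
    (∀ u ∈ P.support, degIn G L u ≤ d) ∧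
    Function.Injective ℓ ∧ (∀ i, ℓ i ∈ L) ∧
    (∀ i : Fin s, lo i ≤ hi i ∧ hi i < P.support.length) ∧
    (∀ i j : Fin s, i < j → hi i < lo j) ∧
    (∀ i : Fin s, ∀ u ∈ P.support, G.Adj (ℓ i) u →
      ∃ n : ℕ, lo i ≤ n ∧ n ≤ hi i ∧ P.support[n]? = some u)

/-- An `(x,z)`-tailed `q`-theta: a `q`-theta with ends `x,y` together with an induced
`y`–`z` path (the tail) meeting the theta only in `y` and with no edges between
the tail minus `y` and the theta minus `y`. -/
def IsTailedTheta (G : SimpleGraph V) {q : ℕ} (x z y : V)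
    (Q : Fin q → G.Walk x y) (P : G.Walk y z) : Prop :=
  x ≠ y ∧ y ≠ z ∧ x ≠ z ∧
  IsTheta G Q ∧
  IsInducedPathWalk G P ∧
  (suppSet P ∩ bananaVerts Q) ⊆ {y} ∧
  Anticomplete G (suppSet P \ {y}) (bananaVerts Q \ {y})

/-- The vertex set of a tailed theta. -/
def tailedThetaVerts {G : SimpleGraph V} {q : ℕ} {x z y : V}
    (Q : Fin q → G.Walk x y) (P : G.Walk y z) : Set V :=
  bananaVerts Q ∪ suppSet P

/-- An `(x,z)`-tailed `(k,q)`-kite: `k` tailed `q`-thetas, pairwise meeting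
exactly in `{x, z}`. -/
def IsKite (G : SimpleGraph V) (k q : ℕ) (x z : V) (y : Fin k → V)
    (Q : ∀ i : Fin k, Fin q → G.Walk x (y i)) (P : ∀ i : Fin k, G.Walk (y i) z) : Prop :=
  (∀ i, IsTailedTheta G x z (y i) (Q i) (P i)) ∧
  ∀ i j, i ≠ j →
    tailedThetaVerts (Q i) (P i) ∩ tailedThetaVerts (Q j) (P j) = {x, z}

/-- The vertex set of a kite. -/
def kiteVerts {G : SimpleGraph V} {k q : ℕ} {x z : V} {y : Fin k → V}
    (Q : ∀ i : Fin k, Fin q → G.Walk x (y i)) (P : ∀ i : Fin k, G.Walk (y i) z) : Set V :=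
  ⋃ i, tailedThetaVerts (Q i) (P i)

/-- A clean kite: every internal theta vertex has degree two in the subgraph induced
by the kite, and the tips `y i` form a stable set. -/
def IsCleanKite (G : SimpleGraph V) (k q : ℕ) (x z : V) (y : Fin k → V)
    (Q : ∀ i : Fin k, Fin q → G.Walk x (y i)) (P : ∀ i : Fin k, G.Walk (y i) z) : Prop :=
  IsKite G k q x z y Q P ∧
  (∀ i : Fin k, ∀ v ∈ bananaVerts (Q i), v ≠ x → v ≠ y i →
    degIn G (kiteVerts Q P) v = 2) ∧
  (∀ i j : Fin k, i ≠ j → ¬ G.Adj (y i) (y j))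

/-- `K` together with the injection `φ` and the path system `P` witnesses that `K`
is a subdivision of `H`. -/
def IsSubdivisionPathsVia {U W : Type} (K : SimpleGraph W) (H : SimpleGraph U)
    (φ : U → W) (P : ∀ u v : U, H.Adj u v → K.Walk (φ u) (φ v)) : Prop :=
  Function.Injective φ ∧
  (∀ u v (h : H.Adj u v), (P u v h).IsPath) ∧
  (∀ u v (h : H.Adj u v), P v u h.symm = (P u v h).reverse) ∧
  (∀ u v (h : H.Adj u v), ∀ w : U, φ w ∈ (P u v h).support → w = u ∨ w = v) ∧
  (∀ u v u' v' (h : H.Adj u v) (h' : H.Adj u' v'), s(u, v) ≠ s(u', v') →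
    ∀ a : W, a ∈ (P u v h).support → a ∈ (P u' v' h').support →
      (a = φ u ∨ a = φ v) ∧ (a = φ u' ∨ a = φ v')) ∧
  (∀ a : W, (∃ u, φ u = a) ∨ (∃ u v, ∃ h : H.Adj u v, a ∈ (P u v h).support)) ∧
  (∀ a b : W, K.Adj a b → ∃ u v, ∃ h : H.Adj u v, s(a, b) ∈ (P u v h).edges)

/-- `K` is a subdivision of `H` with branch vertices given by `φ`. -/
def IsSubdivisionVia {U W : Type} (K : SimpleGraph W) (H : SimpleGraph U)
    (φ : U → W) : Prop :=
  ∃ P, IsSubdivisionPathsVia K H φ P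

/-- `K` is a proper subdivision of `H` (every edge replaced by a path of length ≥ 2). -/
def IsProperSubdivisionVia {U W : Type} (K : SimpleGraph W) (H : SimpleGraph U)
    (φ : U → W) : Prop :=
  ∃ P, IsSubdivisionPathsVia K H φ P ∧ ∀ u v (h : H.Adj u v), 2 ≤ (P u v h).length

/-- `G` contains, as an induced subgraph, a subdivision of `H`. -/
def ContainsInducedSubdivision (G : SimpleGraph V) {U : Type} (H : SimpleGraph U) : Prop :=
  ∃ (S : Set V) (φ : U → ↥S), IsSubdivisionVia (G.induce S) H φ

/-- `G` contains, as an induced subgraph, a proper subdivision of `H`. -/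
def ContainsInducedProperSubdivision (G : SimpleGraph V) {U : Type} (H : SimpleGraph U) : Prop :=
  ∃ (S : Set V) (φ : U → ↥S), IsProperSubdivisionVia (G.induce S) H φ

/-- The `r`-by-`r` wall (hexagonal grid): `r` horizontal paths on `2r` vertices each,
with vertical edges between consecutive rows at columns of the appropriate parity. -/
def wall (r : ℕ) : SimpleGraph (Fin r × Fin (2 * r)) :=
  SimpleGraph.fromRel (fun a b =>
    (a.1 = b.1 ∧ (a.2 : ℕ) + 1 = (b.2 : ℕ)) ∨
    (a.2 = b.2 ∧ (a.1 : ℕ) + 1 = (b.1 : ℕ) ∧ ((a.1 : ℕ) + (a.2 : ℕ)) % 2 = 0))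

/-- The `1`-by-`r` wall: two horizontal paths, each with `r+1` vertices, joined by
`r+1` vertical edges (whose proper subdivisions are the `r+1` vertical paths),
forming `r` consecutive faces. -/
def wallOneRow (r : ℕ) : SimpleGraph (Fin 2 × Fin (r + 1)) :=
  SimpleGraph.fromRel (fun a b =>
    (a.1 = b.1 ∧ (a.2 : ℕ) + 1 = (b.2 : ℕ)) ∨ (a.2 = b.2 ∧ a.1 ≠ b.1))

/-- A tree decomposition of `G`: a tree `T` with bags `χ` covering all vertices and
edges, such that for each vertex the set of bags containing it induces a connected
subgraph of `T`. -/
def IsTreeDecomp {ι : Type} (G : SimpleGraph V) (T : SimpleGraph ι) (χ : ι → Finset V) : Prop :=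
  T.IsTree ∧
  (∀ v : V, ∃ i, v ∈ χ i) ∧
  (∀ u v : V, G.Adj u v → ∃ i, u ∈ χ i ∧ v ∈ χ i) ∧
  (∀ v : V, (T.induce {i | v ∈ χ i}).Connected)

/-- Vertices of the full binary tree of radius `r`: level `i` has `2^i` nodes. -/
def FbtVertex (r : ℕ) : Type := (i : Fin (r + 1)) × Fin (2 ^ (i : ℕ))

/-- The full binary tree of radius `r`: every non-leaf has two children,
and every leaf is at distance `r` from the root. -/
def fullBinaryTree (r : ℕ) : SimpleGraph (FbtVertex r) :=
  SimpleGraph.fromRel (fun a b =>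
    (a.1 : ℕ) + 1 = (b.1 : ℕ) ∧ (b.2 : ℕ) / 2 = (a.2 : ℕ))

/-- An `r`-fleet with anchor `x`, contained in `A`: an induced subdivision `T'` (on the
vertex set `S`) of the full binary tree of radius `r`, not containing `x`, such that the
neighbours of `x` in `T'` are exactly the (images of the) leaves of the binary tree. -/
def IsFleetIn (G : SimpleGraph V) (A : Set V) (r : ℕ) (x : V) : Prop :=
  x ∈ A ∧
  ∃ S : Set V, S ⊆ A ∧ x ∉ S ∧
    ∃ φ : FbtVertex r → ↥S,
      IsSubdivisionVia (G.induce S) (fullBinaryTree r) φ ∧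
      ∀ v : ↥S, (G.Adj x ↑v ↔ ∃ j : Fin (2 ^ r), φ ⟨Fin.last r, j⟩ = v)

/-- The set `A` induces a path in `G`. -/
def IsInducedPathSet (G : SimpleGraph V) (A : Set V) : Prop :=
  ∃ (a b : V) (p : G.Walk a b), IsInducedPathWalk G p ∧ A = suppSet p

/-- `G` contains an ample `(s,l)`-constellation as an induced subgraph: a stable set `S`
of size `s` and `l` pairwise disjoint, pairwise anticomplete induced paths, disjoint from
`S`, such that every vertex of `S` has a neighbour in every path, and (ampleness) no two
vertices of `S` have a common neighbour in the constellation. -/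
def HasAmpleConstellation (G : SimpleGraph V) (s l : ℕ) : Prop :=
  ∃ (S : Set V) (L : Fin l → Set V),
    S.ncard = s ∧
    (∀ a ∈ S, ∀ b ∈ S, a ≠ b → ¬ G.Adj a b) ∧
    (∀ i, IsInducedPathSet G (L i)) ∧
    (∀ i j, i ≠ j → Disjoint (L i) (L j) ∧ Anticomplete G (L i) (L j)) ∧
    (∀ i, Disjoint S (L i)) ∧
    (∀ a ∈ S, ∀ i, ∃ v ∈ L i, G.Adj a v) ∧
    (∀ a ∈ S, ∀ b ∈ S, a ≠ b → ∀ v, (∃ i, v ∈ L i) → ¬ (G.Adj a v ∧ G.Adj b v))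

lemma Fin.val_sub_eq_one_iff {n : ℕ} (hn : 2 ≤ n) (i j : Fin n) :
    (j - i).val = 1 ↔ j.val = i.val + 1 ∨ (i.val + 1 = n ∧ j.val = 0) := by
  have := i.isLt
  have := j.isLt
  rcases le_or_gt i j with hij | hij
  · rw [Fin.coe_sub_iff_le.mpr hij]
    rw [Fin.le_def] at hij
    omega
  · rw [Fin.coe_sub_iff_lt.mpr hij]
    rw [Fin.lt_def] at hij
    omega

lemma isIndContained_cycleGraph_of_isInduced {W : Type} {K : SimpleGraph W} {u : W}
    {c : K.Walk u u} (hc : c.IsCycle) (hind : c.toSubgraph.IsInduced) :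
    cycleGraph c.length ⊴ K := by
  have h3 := hc.three_le_length
  have hinj : ∀ i j, i < c.length → j < c.length → c.getVert i = c.getVert j → i = j :=
    fun i j hi hj h => hc.getVert_injOn' (by simp; omega) (by simp; omega) h
  have hnext : ∀ i j : Fin c.length,
      c.getVert j = c.getVert (i.val + 1) ↔ (j - i).val = 1 := by
    intro i j
    rw [Fin.val_sub_eq_one_iff (by omega)]
    constructor
    · intro h
      rcases Nat.lt_or_ge (i.val + 1) c.length with hi | hi
      · exact Or.inl (hinj _ _ j.isLt hi h)
      · refine Or.inr ⟨by omega, hinj _ _ j.isLt (by omega) ?_⟩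
        rw [h, show i.val + 1 = c.length by omega, Walk.getVert_length, Walk.getVert_zero]
    · rintro (h | ⟨h, h'⟩)
      · rw [h]
      · rw [h', h, Walk.getVert_length, Walk.getVert_zero]
  have hadj : ∀ i j : Fin c.length, (j - i).val = 1 → K.Adj (c.getVert i) (c.getVert j) :=
    fun i j h => (hnext i j).mpr h ▸ c.adj_getVert_succ i.isLt
  refine ⟨⟨⟨fun i => c.getVert i, fun i j h => Fin.ext (hinj _ _ i.isLt j.isLt h)⟩, ?_⟩⟩
  intro i j
  simp only [cycleGraph_adj']
  refine ⟨fun h => ?_, fun h => h.elim (fun h => (hadj j i h).symm) (hadj i j)⟩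
  have he := hind (c.mem_verts_toSubgraph.mpr (c.getVert_mem_support i))
    (c.mem_verts_toSubgraph.mpr (c.getVert_mem_support j)) h
  obtain ⟨k, hk, he⟩ := c.mk_mem_edges_iff_exists.mp (Walk.adj_toSubgraph_iff_mem_edges.mp he)
  rcases Sym2.eq_iff.mp he with ⟨h1, h2⟩ | ⟨h1, h2⟩
  · obtain rfl : k = i.val := hinj _ _ hk i.isLt h1
    exact Or.inr ((hnext i j).mp h2.symm)
  · obtain rfl : k = j.val := hinj _ _ hk j.isLt h1
    exact Or.inl ((hnext j i).mp h2.symm)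

lemma HasInducedCycleOfLength.of_embedding {W V : Type} {K : SimpleGraph W}
    {G : SimpleGraph V} (f : K ↪g G) {n : ℕ} (h : HasInducedCycleOfLength K n) :
    HasInducedCycleOfLength G n :=
  ⟨h.1, ⟨f.comp h.2.some⟩⟩

section Subdivision

variable {U W : Type} {H : SimpleGraph U} {K : SimpleGraph W} {φ : U → W}
  {P : ∀ u v : U, H.Adj u v → K.Walk (φ u) (φ v)}

def liftWalk (P : ∀ u v : U, H.Adj u v → K.Walk (φ u) (φ v)) :
    {u v : U} → H.Walk u v → K.Walk (φ u) (φ v)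
  | _, _, .nil => .nil
  | _, _, .cons h p => (P _ _ h).append (liftWalk P p)

open Classical in
noncomputable def segLen (P : ∀ u v : U, H.Adj u v → K.Walk (φ u) (φ v)) (u v : U) : ℕ :=
  if h : H.Adj u v then (P u v h).length else 0

lemma segLen_of_adj {u v : U} (h : H.Adj u v) : segLen P u v = (P u v h).length :=
  dif_pos h

lemma segLen_comm (hS : IsSubdivisionPathsVia K H φ P) (u v : U) :
    segLen P v u = segLen P u v := by
  by_cases h : H.Adj u v
  · rw [segLen_of_adj h, segLen_of_adj h.symm, hS.2.2.1 u v h, Walk.length_reverse]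
  · rw [segLen, segLen, dif_neg h, dif_neg (fun h' => h h'.symm)]

lemma length_liftWalk {u v : U} (p : H.Walk u v) :
    (liftWalk P p).length = (p.darts.map fun d => segLen P d.fst d.snd).sum := by
  induction p with
  | nil => rfl
  | cons h p ih => simp [liftWalk, ih, segLen_of_adj h]

lemma length_le_length_liftWalk (hS : IsSubdivisionPathsVia K H φ P) {u v : U}
    (p : H.Walk u v) : p.length ≤ (liftWalk P p).length := by
  induction p with
  | nil => exact le_rfl
  | cons h p ih =>
    have hpos : (P _ _ h).length ≠ 0 := fun h0 =>
      h.ne (hS.1 (Walk.eq_of_length_eq_zero h0))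
    rw [liftWalk, Walk.length_append, Walk.length_cons]
    omega

lemma mem_support_liftWalk {u v : U} {p : H.Walk u v} {x : W}
    (hx : x ∈ (liftWalk P p).support) :
    x = φ u ∨ ∃ d ∈ p.darts, x ∈ (P d.fst d.snd d.adj).support := by
  induction p with
  | nil => exact Or.inl (by simpa [liftWalk] using hx)
  | cons h p ih =>
    rw [liftWalk, Walk.mem_support_append_iff] at hx
    refine Or.inr ?_
    rcases hx with hx | hx
    · exact ⟨_, List.mem_cons_self, hx⟩
    · rcases ih hx with rfl | ⟨d, hd, hxd⟩
      · exact ⟨_, List.mem_cons_self, Walk.end_mem_support _⟩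
      · exact ⟨d, List.mem_cons_of_mem _ hd, hxd⟩

lemma mem_support_of_mem_support_liftWalk (hS : IsSubdivisionPathsVia K H φ P)
    {u v t : U} {p : H.Walk u v} (ht : φ t ∈ (liftWalk P p).support) : t ∈ p.support := by
  rcases mem_support_liftWalk ht with h | ⟨d, hd, htd⟩
  · rw [hS.1 h]
    exact p.start_mem_support
  · rcases hS.2.2.2.1 _ _ d.adj t htd with rfl | rfl
    · exact p.dart_fst_mem_support_of_mem_darts hd
    · exact p.dart_snd_mem_support_of_mem_darts hd

lemma eq_of_mem_support_liftWalk (hS : IsSubdivisionPathsVia K H φ P) {u v a b : U}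
    {p : H.Walk u v} (hab : H.Adj a b) (he : s(a, b) ∉ p.edges) {x : W}
    (hx : x ∈ (liftWalk P p).support) (hxab : x ∈ (P a b hab).support) :
    x = φ a ∨ x = φ b := by
  rcases mem_support_liftWalk hx with rfl | ⟨d, hd, hxd⟩
  · rcases hS.2.2.2.1 a b hab u hxab with rfl | rfl <;> simp
  · have hne : s(a, b) ≠ s(d.fst, d.snd) := fun h =>
      he (h ▸ List.mem_map_of_mem (f := Dart.edge) hd)
    exact (hS.2.2.2.2.1 a b _ _ hab d.adj hne x hxab hxd).1

lemma edges_subset_edges_liftWalk (hS : IsSubdivisionPathsVia K H φ P) {u v a b : U}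
    {p : H.Walk u v} (hab : H.Adj a b) (he : s(a, b) ∈ p.edges) :
    (P a b hab).edges ⊆ (liftWalk P p).edges := by
  induction p with
  | nil => simp at he
  | cons h p ih =>
    intro e hea
    rw [liftWalk, Walk.edges_append, List.mem_append]
    rcases List.mem_cons.mp he with he | he
    · rcases Sym2.eq_iff.mp he with ⟨rfl, rfl⟩ | ⟨rfl, rfl⟩
      · exact Or.inl hea
      · rw [hS.2.2.1 _ _ h, Walk.edges_reverse, List.mem_reverse] at hea
        exact Or.inl hea
    · exact Or.inr (ih he hea)

lemma start_notMem_support_tail_of_isPath {u v : W} {q : K.Walk u v} (hq : q.IsPath) :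
    u ∉ q.support.tail := by
  have := hq.support_nodup
  rw [← q.cons_tail_support] at this
  exact (List.nodup_cons.mp this).1

lemma isPath_liftWalk (hS : IsSubdivisionPathsVia K H φ P) {u v : U} {p : H.Walk u v}
    (hp : p.IsPath) : (liftWalk P p).IsPath := by
  induction p with
  | nil => exact Walk.IsPath.nil
  | @cons a b _ h p ih =>
    rw [Walk.cons_isPath_iff] at hp
    have hq := ih hp.1
    rw [liftWalk, Walk.isPath_def, Walk.support_append, List.nodup_append']
    refine ⟨(hS.2.1 _ _ h).support_nodup, hq.support_nodup.sublist (List.tail_sublist _),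
      fun x hxP hxq => ?_⟩
    have he : s(a, b) ∉ p.edges := fun he => hp.2 (p.fst_mem_support_of_mem_edges he)
    rcases eq_of_mem_support_liftWalk hS h he (List.mem_of_mem_tail hxq) hxP with rfl | rfl
    · exact hp.2 (mem_support_of_mem_support_liftWalk hS (List.mem_of_mem_tail hxq))
    · exact start_notMem_support_tail_of_isPath hq hxq

lemma isCycle_liftWalk (hS : IsSubdivisionPathsVia K H φ P) {u : U} {c : H.Walk u u}
    (hc : c.IsCycle) : (liftWalk P c).IsCycle := by
  cases c with
  | nil => exact absurd hc Walk.not_isCycle_nil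
  | cons h p =>
    have h3 := hc.three_le_length
    rw [Walk.cons_isCycle_iff] at hc
    have hq := isPath_liftWalk hS hc.1
    refine (hS.2.1 _ _ h).isCycle_append hq (fun x hxP hxq => ?_)
      (Or.inr (by have := length_le_length_liftWalk (P := P) hS p; simp at h3; omega))
    rcases eq_of_mem_support_liftWalk hS h hc.2 (List.mem_of_mem_tail hxq)
      (List.mem_of_mem_tail hxP) with rfl | rfl
    · exact start_notMem_support_tail_of_isPath (hS.2.1 _ _ h) hxP
    · exact start_notMem_support_tail_of_isPath hq hxq

lemma isInduced_toSubgraph_liftWalk (hS : IsSubdivisionPathsVia K H φ P)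
    (hP : ∀ u v (h : H.Adj u v), 2 ≤ (P u v h).length) {u v : U} (p : H.Walk u v) :
    (liftWalk P p).toSubgraph.IsInduced := by
  intro x hx y hy hxy
  rw [Walk.mem_verts_toSubgraph] at hx hy
  rw [Walk.adj_toSubgraph_iff_mem_edges]
  obtain ⟨a, b, hab, he⟩ := hS.2.2.2.2.2.2 x y hxy
  by_cases hp : s(a, b) ∈ p.edges
  · exact edges_subset_edges_liftWalk hS hab hp he
  · exfalso
    have hlen := hP a b hab
    have hx' := eq_of_mem_support_liftWalk hS hab hp hx (Walk.fst_mem_support_of_mem_edges _ he)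
    have hy' := eq_of_mem_support_liftWalk hS hab hp hy (Walk.snd_mem_support_of_mem_edges _ he)
    have hpath := hS.2.1 a b hab
    rcases hx' with rfl | rfl <;> rcases hy' with rfl | rfl
    · exact hxy.ne rfl
    · have := hpath.length_eq_one_of_mem_edges he; omega
    · rw [Sym2.eq_swap] at he
      have := hpath.length_eq_one_of_mem_edges he; omega
    · exact hxy.ne rfl

lemma hasInducedCycleOfLength_liftWalk (hS : IsSubdivisionPathsVia K H φ P)
    (hP : ∀ u v (h : H.Adj u v), 2 ≤ (P u v h).length) {u : U} {c : H.Walk u u}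
    (hc : c.IsCycle) : HasInducedCycleOfLength K (liftWalk P c).length :=
  have hc' := isCycle_liftWalk hS hc
  ⟨hc'.three_le_length,
    isIndContained_cycleGraph_of_isInduced hc' (isInduced_toSubgraph_liftWalk hS hP c)⟩

end Subdivision

section Wall

open Fin.NatCast

variable {m : ℕ}

lemma wallOneRow_adj_row (i : Fin 2) {k : ℕ} (hk : k < m) :
    (wallOneRow m).Adj (i, (k : Fin (m + 1))) (i, ((k + 1 : ℕ) : Fin (m + 1))) := by
  have h1 : ((k : Fin (m + 1)) : ℕ) = k := Fin.val_cast_of_lt (by omega)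
  have h2 : (((k + 1 : ℕ) : Fin (m + 1)) : ℕ) = k + 1 := Fin.val_cast_of_lt (by omega)
  rw [wallOneRow, fromRel_adj]
  refine ⟨fun h => ?_, Or.inl (Or.inl ⟨rfl, by rw [h1, h2]⟩)⟩
  have := congrArg (fun x => (x.2 : ℕ)) h
  simp only [h1, h2] at this
  omega

lemma wallOneRow_adj_rung (k : Fin (m + 1)) : (wallOneRow m).Adj (0, k) (1, k) := by
  simp [wallOneRow, fromRel_adj]

def rowWalk (i : Fin 2) (a : ℕ) : (d : ℕ) → a + d ≤ m →
    (wallOneRow m).Walk (i, (a : Fin (m + 1))) (i, ((a + d : ℕ) : Fin (m + 1)))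
  | 0, _ => .nil
  | d + 1, h => (rowWalk i a d (by omega)).concat (wallOneRow_adj_row i (by omega : a + d < m))

lemma length_rowWalk (i : Fin 2) (a : ℕ) :
    ∀ (d : ℕ) (h : a + d ≤ m), (rowWalk i a d h).length = d
  | 0, _ => rfl
  | d + 1, h => by rw [rowWalk, Walk.length_concat, length_rowWalk i a d]

lemma mem_support_rowWalk {i : Fin 2} {a : ℕ} :
    ∀ {d : ℕ} {h : a + d ≤ m} {x : Fin 2 × Fin (m + 1)}, x ∈ (rowWalk i a d h).support →
      x.1 = i ∧ a ≤ x.2.val ∧ x.2.val ≤ a + d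
  | 0, h, x, hx => by
    have : ((a : Fin (m + 1)) : ℕ) = a := Fin.val_cast_of_lt (by omega)
    simp only [rowWalk, Walk.support_nil, List.mem_singleton] at hx
    subst hx
    simp [this]
  | d + 1, h, x, hx => by
    rw [rowWalk, Walk.support_concat, List.mem_append, List.mem_singleton] at hx
    rcases hx with hx | rfl
    · have := mem_support_rowWalk hx
      omega
    · have : (((a + (d + 1) : ℕ) : Fin (m + 1)) : ℕ) = a + (d + 1) :=
        Fin.val_cast_of_lt (by omega)
      refine ⟨rfl, ?_⟩
      dsimp only
      omega

lemma isPath_rowWalk (i : Fin 2) (a : ℕ) :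
    ∀ (d : ℕ) (h : a + d ≤ m), (rowWalk i a d h).IsPath
  | 0, _ => Walk.IsPath.nil
  | d + 1, h => by
    refine (isPath_rowWalk i a d (by omega)).concat (fun hx => ?_) _
    have := (mem_support_rowWalk hx).2.2
    rw [Fin.val_cast_of_lt (by omega)] at this
    omega

lemma sum_darts_rowWalk (f : Fin 2 × Fin (m + 1) → Fin 2 × Fin (m + 1) → ℕ) (i : Fin 2)
    (a : ℕ) : ∀ (d : ℕ) (h : a + d ≤ m),
    ((rowWalk i a d h).darts.map fun e => f e.fst e.snd).sum =
      ∑ k ∈ Finset.range d,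
        f (i, ((a + k : ℕ) : Fin (m + 1))) (i, ((a + k + 1 : ℕ) : Fin (m + 1)))
  | 0, _ => rfl
  | d + 1, h => by
    rw [rowWalk, Walk.darts_concat, List.concat_eq_append, List.map_append, List.sum_append,
      sum_darts_rowWalk f i a d, Finset.sum_range_succ]
    rfl

/-- The boundary of the faces `a, …, a + d - 1` of the wall. -/
def faceCycle (a d : ℕ) (h : a + d ≤ m) :
    (wallOneRow m).Walk (1, (a : Fin (m + 1))) (1, (a : Fin (m + 1))) :=
  .cons (wallOneRow_adj_rung _).symm
    ((rowWalk 0 a d h).append (.cons (wallOneRow_adj_rung _) (rowWalk 1 a d h).reverse))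

lemma isCycle_faceCycle {a d : ℕ} (hd : 0 < d) (h : a + d ≤ m) :
    (faceCycle a d h).IsCycle := by
  have hpath : ((rowWalk 0 a d h).append
      (.cons (wallOneRow_adj_rung _) (rowWalk 1 a d h).reverse)).IsPath := by
    rw [Walk.isPath_def, Walk.support_append, Walk.support_cons, List.tail_cons,
      Walk.support_reverse, List.nodup_append']
    refine ⟨(isPath_rowWalk 0 a d h).support_nodup,
      List.nodup_reverse.mpr (isPath_rowWalk 1 a d h).support_nodup, fun x hx0 hx1 => ?_⟩
    rw [List.mem_reverse] at hx1
    exact absurd ((mem_support_rowWalk hx0).1.symm.trans (mem_support_rowWalk hx1).1)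
      (by decide)
  rw [faceCycle, Walk.cons_isCycle_iff]
  refine ⟨hpath, fun he => ?_⟩
  rw [Sym2.eq_swap] at he
  have := hpath.length_eq_one_of_mem_edges he
  simp only [Walk.length_append, Walk.length_cons, Walk.length_reverse, length_rowWalk] at this
  omega

lemma sum_darts_faceCycle (f : Fin 2 × Fin (m + 1) → Fin 2 × Fin (m + 1) → ℕ)
    (hf : ∀ x y, f y x = f x y) (a d : ℕ) (h : a + d ≤ m) :
    ((faceCycle a d h).darts.map fun e => f e.fst e.snd).sum =
      f (0, (a : Fin (m + 1))) (1, (a : Fin (m + 1))) +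
        f (0, ((a + d : ℕ) : Fin (m + 1))) (1, ((a + d : ℕ) : Fin (m + 1))) +
      ∑ k ∈ Finset.range d,
        (f (0, ((a + k : ℕ) : Fin (m + 1))) (0, ((a + k + 1 : ℕ) : Fin (m + 1))) +
          f (1, ((a + k : ℕ) : Fin (m + 1))) (1, ((a + k + 1 : ℕ) : Fin (m + 1)))) := by
  have hrev : (((rowWalk 1 a d h).darts.map Dart.symm).reverse.map
      fun e => f e.fst e.snd).sum = ((rowWalk 1 a d h).darts.map fun e => f e.fst e.snd).sum := by
    simp [List.map_reverse, List.sum_reverse, Function.comp_def, hf]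
  simp only [faceCycle, Walk.darts_cons, Walk.darts_append, Walk.darts_reverse, List.map_cons,
    List.map_append, List.sum_cons, List.sum_append, hrev, sum_darts_rowWalk,
    Finset.sum_add_distrib]
  rw [hf]
  ring

variable {W : Type} {K : SimpleGraph W} {φ : Fin 2 × Fin (m + 1) → W}
  {P : ∀ u v : Fin 2 × Fin (m + 1), (wallOneRow m).Adj u v → K.Walk (φ u) (φ v)}

noncomputable def rungLength (P : ∀ u v, (wallOneRow m).Adj u v → K.Walk (φ u) (φ v))
    (k : ℕ) : ℕ :=
  segLen P (0, (k : Fin (m + 1))) (1, (k : Fin (m + 1)))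

noncomputable def faceRowLength (P : ∀ u v, (wallOneRow m).Adj u v → K.Walk (φ u) (φ v))
    (k : ℕ) : ℕ :=
  segLen P (0, (k : Fin (m + 1))) (0, ((k + 1 : ℕ) : Fin (m + 1))) +
    segLen P (1, (k : Fin (m + 1))) (1, ((k + 1 : ℕ) : Fin (m + 1)))

lemma faceRowLength_pos (hP : ∀ u v (h : (wallOneRow m).Adj u v), 2 ≤ (P u v h).length)
    {k : ℕ} (hk : k < m) : 0 < faceRowLength P k := by
  have := hP _ _ (wallOneRow_adj_row 0 hk)
  rw [faceRowLength, segLen_of_adj (wallOneRow_adj_row 0 hk)]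
  omega

lemma hasInducedCycleOfLength_face (hS : IsSubdivisionPathsVia K (wallOneRow m) φ P)
    (hP : ∀ u v (h : (wallOneRow m).Adj u v), 2 ≤ (P u v h).length) {a b : ℕ} (hab : a < b)
    (hb : b ≤ m) :
    HasInducedCycleOfLength K
      (rungLength P a + rungLength P b + ∑ k ∈ Finset.Ico a b, faceRowLength P k) := by
  obtain ⟨d, rfl⟩ : ∃ d, b = a + d := ⟨b - a, by omega⟩
  rw [Finset.sum_Ico_eq_sum_range, Nat.add_sub_cancel_left]
  have h := hasInducedCycleOfLength_liftWalk hS hP (isCycle_faceCycle (by omega) hb)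
  rwa [length_liftWalk, sum_darts_faceCycle _ (segLen_comm hS)] at h

end Wall

lemma sub_one_le_sq_card {m : ℕ} {t v : ℕ → ℕ} (ht : ∀ k < m, 0 < t k) {D : Finset ℕ}
    (hD : ∀ a b, a < b → b ≤ m → v a + v b + ∑ k ∈ Finset.Ico a b, t k ∈ D) :
    m - 1 ≤ D.card ^ 2 := by
  set ℓ : ℕ → ℕ → ℕ := fun a b => v a + v b + ∑ k ∈ Finset.Ico a b, t k
  have hsplit : ∀ i j k, i ≤ j → j ≤ k → ∑ x ∈ Finset.Ico i k, t x =
      ∑ x ∈ Finset.Ico i j, t x + ∑ x ∈ Finset.Ico j k, t x :=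
    fun i j k hij hjk => (Finset.sum_Ico_consecutive t hij hjk).symm
  have hsep : ∀ i j, i < j → j < m → ℓ 0 i = ℓ 0 j → ℓ i m = ℓ j m → False := by
    intro i j hij hjm h0 hm
    have hpos : 0 < ∑ x ∈ Finset.Ico i j, t x :=
      Finset.sum_pos (fun k hk => ht k (by simp at hk; omega)) ⟨i, by simp [hij]⟩
    simp only [ℓ, hsplit 0 i j (Nat.zero_le _) hij.le, hsplit i j m hij.le (by omega)] at h0 hm
    omega
  have hinj : (Finset.Ioo 0 m).card ≤ (D ×ˢ D).card := by
    refine Finset.card_le_card_of_injOn (fun j => (ℓ 0 j, ℓ j m)) (fun j hj => ?_)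
      (fun i hi j hj hij => ?_)
    · simp only [Finset.coe_Ioo, Set.mem_Ioo] at hj
      exact Finset.mem_product.mpr ⟨hD 0 j hj.1 hj.2.le, hD j m hj.2 le_rfl⟩
    · simp only [Finset.coe_Ioo, Set.mem_Ioo, Prod.mk.injEq] at hi hj hij
      rcases lt_trichotomy i j with h | h | h
      · exact (hsep i j h hj.2 hij.1 hij.2).elim
      · exact h
      · exact (hsep j i h hi.2 hij.1.symm hij.2.symm).elim
  rw [Nat.card_Ioo, Finset.card_product] at hinj
  rw [sq]
  omega

lemma exists_card_eq_of_sq_le {c m : ℕ} (hm : c ^ 2 ≤ m) {t : ℕ → ℕ} (v : ℕ → ℕ)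
    (ht : ∀ k < m, 0 < t k) :
    ∃ L : Finset ℕ, L.card = c ∧ ∀ n ∈ L,
      ∃ a b, a < b ∧ b ≤ m ∧ n = v a + v b + ∑ k ∈ Finset.Ico a b, t k := by
  set D := ((Finset.range (m + 1) ×ˢ Finset.range (m + 1)).filter fun p => p.1 < p.2).image
    fun p => v p.1 + v p.2 + ∑ k ∈ Finset.Ico p.1 p.2, t k
  have hD : ∀ a b, a < b → b ≤ m → v a + v b + ∑ k ∈ Finset.Ico a b, t k ∈ D := by
    intro a b hab hb
    refine Finset.mem_image_of_mem (f := fun p => v p.1 + v p.2 + ∑ k ∈ Finset.Ico p.1 p.2, t k)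
      (a := (a, b)) ?_
    simp only [Finset.mem_filter, Finset.mem_product, Finset.mem_range]
    omega
  have hc : c ≤ D.card := by
    by_contra! hlt
    have hne : 0 < D.card := Finset.card_pos.mpr ⟨_, hD 0 m (by nlinarith) le_rfl⟩
    have h1 : (D.card + 1) ^ 2 ≤ m := (Nat.pow_le_pow_left hlt 2).trans hm
    have h2 : m ≤ D.card ^ 2 + 1 := by have := sub_one_le_sq_card ht hD; omega
    nlinarith
  obtain ⟨L, hLD, hL⟩ := Finset.exists_subset_card_eq hc
  refine ⟨L, hL, fun n hn => ?_⟩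
  obtain ⟨⟨a, b⟩, hab, rfl⟩ := Finset.mem_image.mp (hLD hn)
  simp only [Finset.mem_filter, Finset.mem_product, Finset.mem_range] at hab
  exact ⟨a, b, hab.2, by omega, rfl⟩

theorem stmt_13_general (c : ℕ) (V : Type) (G : SimpleGraph V)
    (h : ContainsInducedProperSubdivision G (wallOneRow (c ^ 2))) :
    ClAtLeast G c := by
  obtain ⟨S, φ, P, hS, hP⟩ := h
  obtain ⟨L, hL, hlen⟩ := exists_card_eq_of_sq_le le_rfl (rungLength P)
    (fun k hk => faceRowLength_pos hP hk)
  refine ⟨L, hL, fun n hn => ?_⟩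
  obtain ⟨a, b, hab, hb, rfl⟩ := hlen n hn
  exact (hasInducedCycleOfLength_face hS hP hab hb).of_embedding (Embedding.induce S)

/-- For every positive integer `c`, if a graph `G` contains, as an
induced subgraph, a proper subdivision of the wall `W_{1×c²}` (two horizontal paths
joined by `c²+1` vertical paths), then `cl(G) ≥ c`. -/
theorem stmt_13 (c : ℕ) (hc : 0 < c) (V : Type) [Fintype V] (G : SimpleGraph V)
    (h : ContainsInducedProperSubdivision G (wallOneRow (c ^ 2))) :
    ClAtLeast G c :=
  stmt_13_general c V G h

end ClPaper
end

section
/- For all positive integers k, q, t, there is a constant f = f(k,q,t) such that every t-tidy graph G that contains an (x,z)-tailed (k,f)-kite contains an (x,z)-tailed (k,q)-kite K' = {(Θ'_{x,y_i}, P_i) : 1 ≤ i ≤ k} in which, for all distinct i and j, the interiors of the thetas are pairwise anticomplete, i.e., V(Θ'_{x,y_i})∖{x,y_i} and V(Θ'_{x,y_j})∖{x,y_j} are anticomplete. -/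
/-! The interior of each path of a theta is connected, and the interiors of distinct paths
of one theta are disjoint and anticomplete. Hence if `t` path interiors of one theta of the
kite were each adjacent to `t` path interiors of another, they would be the branch sets of an
induced `K_{t,t}` minor. In a `t`-tidy graph the bipartite relation "not anticomplete" between
the paths of two thetas therefore has no complete `t`-by-`t` pair, and a Ramsey argument by
repeated halving shrinks the thetas, one ordered pair at a time, to `q` paths each whose
interiors are anticomplete across thetas. -/

open SimpleGraph

namespace ClPaper

variable {V : Type}

section Selection

open Finset

variable {α β ι : Type*}

lemma exists_half_homogeneous (E : β → Prop) (Y : Finset β) :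
    ∃ Y' ⊆ Y, Y.card ≤ 2 * Y'.card ∧ ((∀ b ∈ Y', E b) ∨ ∀ b ∈ Y', ¬ E b) := by
  classical
  have hsplit := card_filter_add_card_filter_not (s := Y) E
  by_cases h : (Y.filter fun b => ¬ E b).card ≤ (Y.filter E).card
  · exact ⟨Y.filter E, filter_subset _ _, by omega, Or.inl fun b hb => (mem_filter.mp hb).2⟩
  · exact ⟨Y.filter fun b => ¬ E b, filter_subset _ _, by omega,
      Or.inr fun b hb => (mem_filter.mp hb).2⟩

lemma exists_homogeneous (E : α → β → Prop) {N : ℕ} {X : Finset α} (Y : Finset β)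
    (hX : N ≤ X.card) :
    ∃ X' ⊆ X, ∃ Y' ⊆ Y, X'.card = N ∧ Y.card ≤ Y'.card * 2 ^ N ∧
      ∀ a ∈ X', (∀ b ∈ Y', E a b) ∨ ∀ b ∈ Y', ¬ E a b := by
  classical
  induction N generalizing X Y with
  | zero => exact ⟨∅, empty_subset _, Y, subset_rfl, card_empty, by simp, by simp⟩
  | succ N ih =>
    obtain ⟨a, ha⟩ := card_pos.mp (by omega : 0 < X.card)
    obtain ⟨Y₁, hY₁, hY₁c, hahom⟩ := exists_half_homogeneous (E a) Y
    obtain ⟨X', hX', Y', hY', hX'c, hY'c, hhom⟩ :=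
      ih Y₁ (by rw [card_erase_of_mem ha]; omega)
    have haX' : a ∉ X' := fun h => (mem_erase.mp (hX' h)).1 rfl
    refine ⟨insert a X', insert_subset ha (hX'.trans (erase_subset _ _)), Y', hY'.trans hY₁,
      by rw [card_insert_of_notMem haX', hX'c], ?_, ?_⟩
    · rw [pow_succ]; nlinarith
    · intro a' ha'
      rcases mem_insert.mp ha' with rfl | ha'
      · exact hahom.imp (fun h b hb => h b (hY' hb)) (fun h b hb => h b (hY' hb))
      · exact hhom a' ha'

/-- Halving `Y` once for each of `n + t` vertices of `X` must leave at least `n + t` vertices. -/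
def anticompleteBound (t n : ℕ) : ℕ := (n + t) * 2 ^ (n + t)

lemma le_anticompleteBound (t n : ℕ) : n + t ≤ anticompleteBound t n :=
  Nat.le_mul_of_pos_right _ (by positivity)

lemma exists_anticomplete_of_not_complete (E : α → β → Prop) {t n : ℕ}
    (hE : ∀ (A : Finset α) (B : Finset β), A.card = t → B.card = t → ¬ ∀ a ∈ A, ∀ b ∈ B, E a b)
    {X : Finset α} {Y : Finset β} (hX : n + t ≤ X.card) (hY : anticompleteBound t n ≤ Y.card) :
    ∃ X' ⊆ X, ∃ Y' ⊆ Y, n ≤ X'.card ∧ n ≤ Y'.card ∧ ∀ a ∈ X', ∀ b ∈ Y', ¬ E a b := by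
  classical
  obtain ⟨X₀, hX₀, Y₀, hY₀, hX₀c, hYY₀, hhom⟩ := exists_homogeneous E Y hX
  have hY₀c : n + t ≤ Y₀.card :=
    Nat.le_of_mul_le_mul_right (hY.trans hYY₀) (by positivity)
  have hC : (X₀.filter fun a => ∀ b ∈ Y₀, E a b).card < t := by
    by_contra! hC
    obtain ⟨A, hA, hAc⟩ := exists_subset_card_eq hC
    obtain ⟨B, hB, hBc⟩ := exists_subset_card_eq (Nat.le_of_add_left_le hY₀c)
    exact hE A B hAc hBc fun a ha b hb => (mem_filter.mp (hA ha)).2 b (hB hb)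
  have hsplit := card_filter_add_card_filter_not (s := X₀) fun a => ∀ b ∈ Y₀, E a b
  refine ⟨X₀.filter fun a => ¬ ∀ b ∈ Y₀, E a b, (filter_subset _ _).trans hX₀, Y₀, hY₀,
    by omega, by omega, fun a ha => ?_⟩
  obtain ⟨ha, hnot⟩ := mem_filter.mp ha
  exact (hhom a ha).resolve_left hnot

/-- The families are shrunk one pair at a time; this keeps the pairs already treated
anticomplete, as subfamilies of anticomplete families are anticomplete. -/
lemma exists_subfamilies_anticomplete (E : ι → ι → α → α → Prop) {t : ℕ}
    (hE : ∀ i j, i ≠ j → ∀ A B : Finset α, A.card = t → B.card = t →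
      ¬ ∀ a ∈ A, ∀ b ∈ B, E i j a b)
    (P : Finset (ι × ι)) (hP : ∀ p ∈ P, p.1 ≠ p.2) {q : ℕ} {S : ι → Finset α}
    (hS : ∀ i, (anticompleteBound t)^[P.card] q ≤ (S i).card) :
    ∃ T : ι → Finset α, (∀ i, T i ⊆ S i ∧ q ≤ (T i).card) ∧
      ∀ p ∈ P, ∀ a ∈ T p.1, ∀ b ∈ T p.2, ¬ E p.1 p.2 a b := by
  classical
  induction P using Finset.induction_on generalizing q with
  | empty => exact ⟨S, fun i => ⟨subset_rfl, hS i⟩, by simp⟩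
  | insert p P hp ih =>
    simp only [card_insert_of_notMem hp, Function.iterate_succ_apply] at hS
    obtain ⟨T, hT, hTP⟩ := ih (fun p' hp' => hP p' (mem_insert_of_mem hp')) hS
    have hp₁₂ := hP p (mem_insert_self _ _)
    obtain ⟨X, hX, Y, hY, hXc, hYc, hXY⟩ := exists_anticomplete_of_not_complete (E p.1 p.2)
      (hE _ _ hp₁₂) ((le_anticompleteBound t q).trans (hT p.1).2) (hT p.2).2
    set T' : ι → Finset α := fun i => if i = p.1 then X else if i = p.2 then Y else T i
    have hT'p₁ : T' p.1 = X := if_pos rfl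
    have hT'p₂ : T' p.2 = Y := by simp [T', hp₁₂.symm]
    have hT'T : ∀ i, T' i ⊆ T i := by
      intro i
      simp only [T']
      split_ifs with h₁ h₂
      exacts [h₁ ▸ hX, h₂ ▸ hY, subset_rfl]
    refine ⟨T', fun i => ⟨(hT'T i).trans (hT i).1, ?_⟩, ?_⟩
    · simp only [T']
      split_ifs
      exacts [hXc, hYc, (Nat.le_add_right q t).trans ((le_anticompleteBound t q).trans (hT i).2)]
    · intro p' hp' a ha b hb
      rcases mem_insert.mp hp' with rfl | hp'
      · exact hXY a (hT'p₁ ▸ ha) b (hT'p₂ ▸ hb)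
      · exact hTP p' hp' a (hT'T _ ha) b (hT'T _ hb)

end Selection

section Graph

open Function

variable {G : SimpleGraph V}

lemma anticomplete_iUnion {ι κ : Type*} {X : ι → Set V} {Y : κ → Set V}
    (h : ∀ a b, Anticomplete G (X a) (Y b)) : Anticomplete G (⋃ a, X a) (⋃ b, Y b) := by
  intro u hu v hv
  obtain ⟨a, hu⟩ := Set.mem_iUnion.mp hu
  obtain ⟨b, hv⟩ := Set.mem_iUnion.mp hv
  exact h a b hu hv

lemma exists_adj_of_not_anticomplete {X Y : Set V} (h : ¬ Anticomplete G X Y) :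
    ∃ u ∈ X, ∃ v ∈ Y, G.Adj u v := by
  simpa [Anticomplete] using h

lemma hasInducedMinor_completeBipartiteGraph {α β : Type} (X : α → Set V) (Y : β → Set V)
    (hXc : ∀ a, (G.induce (X a)).Connected) (hYc : ∀ b, (G.induce (Y b)).Connected)
    (hXd : Pairwise (Disjoint on X)) (hYd : Pairwise (Disjoint on Y))
    (hXYd : ∀ a b, Disjoint (X a) (Y b))
    (hXa : Pairwise fun a a' => Anticomplete G (X a) (X a'))
    (hYa : Pairwise fun b b' => Anticomplete G (Y b) (Y b'))
    (hXY : ∀ a b, ¬ Anticomplete G (X a) (Y b)) :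
    HasInducedMinor G (completeBipartiteGraph α β) := by
  refine ⟨Sum.elim X Y, ?_, ?_, ?_, ?_⟩
  · rintro (a | b)
    exacts [Set.nonempty_coe_sort.mp (hXc a).nonempty, Set.nonempty_coe_sort.mp (hYc b).nonempty]
  · rintro (a | b)
    exacts [hXc a, hYc b]
  · rintro (a | b) (a' | b') hne
    · exact hXd fun h => hne (congrArg _ h)
    · exact hXYd a b'
    · exact (hXYd a' b).symm
    · exact hYd fun h => hne (congrArg _ h)
  · rintro (a | b) (a' | b') hne <;>
      simp only [completeBipartiteGraph_adj, Sum.isLeft_inl, Sum.isRight_inl, Sum.isLeft_inr,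
        Sum.isRight_inr, Sum.elim_inl, Sum.elim_inr]
    · simpa [Anticomplete] using hXa fun h => hne (congrArg _ h)
    · simpa [Anticomplete] using hXY a b'
    · obtain ⟨u, hu, v, hv, huv⟩ := exists_adj_of_not_anticomplete (hXY a' b)
      simpa using ⟨v, hv, u, hu, huv.symm⟩
    · simpa [Anticomplete] using hYa fun h => hne (congrArg _ h)

lemma exists_walk_suppSet_eq_interiorSet {x y : V} {p : G.Walk x y} (hp : p.IsPath)
    (hne : (interiorSet p).Nonempty) : ∃ (a b : V) (w : G.Walk a b), suppSet w = interiorSet p := by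
  obtain ⟨v, hv, hvx, hvy⟩ := hne
  cases p with
  | nil => simp_all
  | cons h q =>
    have hq : ¬ q.Nil := by
      rintro hq
      cases hq
      simp_all
    refine ⟨_, _, q.dropLast, ?_⟩
    have hsupp := Walk.support_dropLast_concat hq
    have hnd := hp.support_nodup
    rw [Walk.support_cons, ← hsupp] at hnd
    ext u
    simp only [suppSet, interiorSet, Walk.support_cons, ← hsupp]
    grind

lemma connected_induce_interiorSet {x y : V} {p : G.Walk x y} (hp : p.IsPath)
    (hne : (interiorSet p).Nonempty) : (G.induce (interiorSet p)).Connected := by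
  obtain ⟨a, b, w, hw⟩ := exists_walk_suppSet_eq_interiorSet hp hne
  exact hw ▸ w.connected_induce_support

section Banana

variable {f q : ℕ} {x z : V}

lemma bananaVerts_diff_ends (P : Fin q → G.Walk x z) :
    bananaVerts P \ {x, z} = ⋃ i, interiorSet (P i) := by
  ext v
  simp [bananaVerts, suppSet, interiorSet]

lemma bananaVerts_comp_subset (P : Fin f → G.Walk x z) (e : Fin q → Fin f) :
    bananaVerts (P ∘ e) ⊆ bananaVerts P :=
  Set.iUnion_subset fun i => Set.subset_iUnion (fun j => suppSet (P j)) (e i)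

lemma IsBanana.disjoint_interiorSet {P : Fin q → G.Walk x z} (h : IsBanana G P) {i j : Fin q}
    (hij : i ≠ j) : Disjoint (interiorSet (P i)) (interiorSet (P j)) :=
  Set.disjoint_left.mpr fun _ hi hj => (h.2.2.2 i j hij _ hi.1 hj.1).elim hi.2.1 hi.2.2

lemma IsTheta.comp {P : Fin f → G.Walk x z} (h : IsTheta G P) {e : Fin q → Fin f}
    (he : Injective e) : IsTheta G (P ∘ e) :=
  ⟨⟨h.1.1, h.1.2.1.comp he, fun i => h.1.2.2.1 (e i),
    fun i j hij => h.1.2.2.2 (e i) (e j) (he.ne hij)⟩,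
    fun i j hij => h.2 (e i) (e j) (he.ne hij)⟩

lemma IsTailedTheta.isTheta {y : V} {Q : Fin f → G.Walk x y} {R : G.Walk y z}
    (h : IsTailedTheta G x z y Q R) : IsTheta G Q :=
  h.2.2.2.1

lemma IsTailedTheta.comp {y : V} {Q : Fin f → G.Walk x y} {R : G.Walk y z}
    (h : IsTailedTheta G x z y Q R) {e : Fin q → Fin f} (he : Injective e) :
    IsTailedTheta G x z y (Q ∘ e) R :=
  have hsub := bananaVerts_comp_subset Q e
  ⟨h.1, h.2.1, h.2.2.1, h.isTheta.comp he, h.2.2.2.2.1,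
    fun _ hv => h.2.2.2.2.2.1 ⟨hv.1, hsub hv.2⟩,
    fun _ hu _ hv => h.2.2.2.2.2.2 hu ⟨hsub hv.1, hv.2⟩⟩

lemma IsTailedTheta.end_notMem_bananaVerts {y : V} {Q : Fin f → G.Walk x y} {R : G.Walk y z}
    (h : IsTailedTheta G x z y Q R) : z ∉ bananaVerts Q := fun hz =>
  h.2.1 (h.2.2.2.2.2.1 ⟨R.end_mem_support, hz⟩).symm

variable {k : ℕ} {y : Fin k → V} {Q : ∀ i, Fin f → G.Walk x (y i)} {R : ∀ i, G.Walk (y i) z}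

lemma IsKite.disjoint_interiorSet (h : IsKite G k f x z y Q R) {i j : Fin k} (hij : i ≠ j)
    (a b : Fin f) : Disjoint (interiorSet (Q i a)) (interiorSet (Q j b)) := by
  refine Set.disjoint_left.mpr fun v hva hvb => ?_
  have hv : v ∈ ({x, z} : Set V) := h.2 i j hij ▸
    ⟨Or.inl (Set.mem_iUnion.mpr ⟨a, hva.1⟩), Or.inl (Set.mem_iUnion.mpr ⟨b, hvb.1⟩)⟩
  rcases hv with rfl | rfl
  · exact hva.2.1 rfl
  · exact (h.1 i).end_notMem_bananaVerts (Set.mem_iUnion.mpr ⟨a, hva.1⟩)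

lemma IsKite.comp (h : IsKite G k f x z y Q R) (hq : 0 < q) {e : Fin k → Fin q → Fin f}
    (he : ∀ i, Injective (e i)) : IsKite G k q x z y (fun i => Q i ∘ e i) R := by
  refine ⟨fun i => (h.1 i).comp (he i), fun i j hij => ?_⟩
  have hsub : ∀ i, tailedThetaVerts (Q i ∘ e i) (R i) ⊆ tailedThetaVerts (Q i) (R i) :=
    fun i => Set.union_subset_union_left _ (bananaVerts_comp_subset _ _)
  have hends : ∀ i, {x, z} ⊆ tailedThetaVerts (Q i ∘ e i) (R i) := by
    refine fun i => Set.insert_subset ?_ (Set.singleton_subset_iff.mpr ?_)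
    · exact Or.inl (Set.mem_iUnion.mpr ⟨⟨0, hq⟩, Walk.start_mem_support _⟩)
    · exact Or.inr (R i).end_mem_support
  refine (Set.subset_inter (hends i) (hends j)).antisymm' ?_
  exact h.2 i j hij ▸ Set.inter_subset_inter (hsub i) (hsub j)

lemma IsKite.not_forall_not_anticomplete {t : ℕ} (h : IsKite G k f x z y Q R) (hG : Tidy G t)
    {i j : Fin k} (hij : i ≠ j) (A B : Finset (Fin f)) (hA : A.card = t) (hB : B.card = t) :
    ¬ ∀ a ∈ A, ∀ b ∈ B, ¬ Anticomplete G (interiorSet (Q i a)) (interiorSet (Q j b)) := by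
  intro hAB
  set eA := A.orderEmbOfFin hA
  set eB := B.orderEmbOfFin hB
  have hXY : ∀ m m', ¬ Anticomplete G (interiorSet (Q i (eA m))) (interiorSet (Q j (eB m'))) :=
    fun m m' => hAB _ (A.orderEmbOfFin_mem hA m) _ (B.orderEmbOfFin_mem hB m')
  have hpath : ∀ i a, (Q i a).IsPath := fun i a => ((h.1 i).isTheta.1.2.2.1 a).1
  refine hG.2 (hasInducedMinor_completeBipartiteGraph _ _ (fun m => ?_) (fun m => ?_)
    (fun m m' hmm => ?_) (fun m m' hmm => ?_) (fun m m' => h.disjoint_interiorSet hij _ _)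
    (fun m m' hmm => ?_) (fun m m' hmm => ?_) hXY)
  · obtain ⟨u, hu, -⟩ := exists_adj_of_not_anticomplete (hXY m m)
    exact connected_induce_interiorSet (hpath i _) ⟨u, hu⟩
  · obtain ⟨-, -, v, hv, -⟩ := exists_adj_of_not_anticomplete (hXY m m)
    exact connected_induce_interiorSet (hpath j _) ⟨v, hv⟩
  · exact (h.1 i).isTheta.1.disjoint_interiorSet (eA.injective.ne hmm)
  · exact (h.1 j).isTheta.1.disjoint_interiorSet (eB.injective.ne hmm)
  · exact (h.1 i).isTheta.2 _ _ (eA.injective.ne hmm)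
  · exact (h.1 j).isTheta.2 _ _ (eB.injective.ne hmm)

end Banana

end Graph

theorem stmt_15_general (k q t : ℕ) (hq : 0 < q) :
    ∃ f : ℕ, ∀ (V : Type) [Fintype V] (G : SimpleGraph V) (x z : V)
      (y : Fin k → V) (Q : ∀ i : Fin k, Fin f → G.Walk x (y i))
      (R : ∀ i : Fin k, G.Walk (y i) z),
      Tidy G t → IsKite G k f x z y Q R →
      ∃ (y' : Fin k → V) (Q' : ∀ i : Fin k, Fin q → G.Walk x (y' i))
        (R' : ∀ i : Fin k, G.Walk (y' i) z),
        IsKite G k q x z y' Q' R' ∧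
        ∀ i j, i ≠ j →
          Anticomplete G (bananaVerts (Q' i) \ {x, y' i})
            (bananaVerts (Q' j) \ {x, y' j}) := by
  let P : Finset (Fin k × Fin k) := Finset.univ.offDiag
  refine ⟨(anticompleteBound t)^[P.card] q, fun V _ G x z y Q R hG hK => ?_⟩
  obtain ⟨T, hT, hTP⟩ := exists_subfamilies_anticomplete
    (fun i j a b => ¬ Anticomplete G (interiorSet (Q i a)) (interiorSet (Q j b)))
    (fun i j hij => hK.not_forall_not_anticomplete hG hij) P
    (fun p hp => (Finset.mem_offDiag.mp hp).2.2) (q := q) (S := fun _ => Finset.univ) (by simp)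
  let e : ∀ i, Fin q ↪o Fin _ := fun i => (T i).orderEmbOfCardLe (hT i).2
  refine ⟨y, fun i => Q i ∘ e i, R, hK.comp hq fun i => (e i).injective, fun i j hij => ?_⟩
  rw [bananaVerts_diff_ends, bananaVerts_diff_ends]
  refine anticomplete_iUnion fun a b => not_not.mp ?_
  exact hTP (i, j) (by simpa [P] using hij) _ ((T i).orderEmbOfCardLe_mem _ a) _
    ((T j).orderEmbOfCardLe_mem _ b)

/-- For all positive integers `k, q, t` there is a constant `f(k,q,t)`
such that every `t`-tidy graph containing an `(x,z)`-tailed `(k,f)`-kite contains an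
`(x,z)`-tailed `(k,q)`-kite whose theta interiors are pairwise anticomplete. -/
theorem stmt_15 (k q t : ℕ) (hk : 0 < k) (hq : 0 < q) (ht : 0 < t) :
    ∃ f : ℕ, ∀ (V : Type) [Fintype V] (G : SimpleGraph V) (x z : V)
      (y : Fin k → V) (Q : ∀ i : Fin k, Fin f → G.Walk x (y i))
      (R : ∀ i : Fin k, G.Walk (y i) z),
      Tidy G t → IsKite G k f x z y Q R →
      ∃ (y' : Fin k → V) (Q' : ∀ i : Fin k, Fin q → G.Walk x (y' i))
        (R' : ∀ i : Fin k, G.Walk (y' i) z),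
        IsKite G k q x z y' Q' R' ∧
        ∀ i j, i ≠ j →
          Anticomplete G (bananaVerts (Q' i) \ {x, y' i})
            (bananaVerts (Q' j) \ {x, y' j}) :=
  stmt_15_general k q t hq

end ClPaper
end
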